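/- Let π ∈ C_m ≀ S_n be a generalized permutation with π(n) ≠ ω^{m-1} (i.e., it is not the case that |π(n)| = 1 and its phase is ω^{m-1}). Define maj_{m,n}(π) := m·maj(π) + Σ_{i=1}^n Log_ω π(i), where maj is computed with respect to the order 1·ω^{m-1} < ... < n·ω^{m-1} < ... < 1 < ... < n and Log_ω π(i) ∈ {0,...,m-1} is the phase exponent. Then maj_{m,n}(t_{n-1} π) = maj_{m,n}(π) + 1, where t_{n-1} is the generalized permutation with t_{n-1}(i) = i-1 for i ≠ 1 and t_{n-1}(1) = ω·n. -/

import Mathlib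

open Finset

@[ext]
structure GenPerm (m n : ℕ) where
  σ : Equiv.Perm (Fin n)
  c : Fin n → ZMod m
deriving DecidableEq

namespace GenPerm

variable {m n : ℕ}

instance [NeZero m] : Fintype (GenPerm m n) :=
  Fintype.ofEquiv (Equiv.Perm (Fin n) × (Fin n → ZMod m))
    { toFun := fun p => ⟨p.1, p.2⟩
      invFun := fun g => (g.σ, g.c)
      left_inv := fun p => rfl
      right_inv := fun g => rfl }

instance : Mul (GenPerm m n) := ⟨fun g h => ⟨g.σ * h.σ, fun j => g.c (h.σ j) + h.c j⟩⟩
instance : One (GenPerm m n) := ⟨⟨1, 0⟩⟩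
instance : Inv (GenPerm m n) := ⟨fun g => ⟨g.σ⁻¹, fun j => - g.c (g.σ⁻¹ j)⟩⟩

@[simp] lemma mul_σ (g h : GenPerm m n) : (g * h).σ = g.σ * h.σ := rfl
@[simp] lemma mul_c (g h : GenPerm m n) (j : Fin n) : (g * h).c j = g.c (h.σ j) + h.c j := rfl
@[simp] lemma one_σ : (1 : GenPerm m n).σ = 1 := rfl
@[simp] lemma one_c (j : Fin n) : (1 : GenPerm m n).c j = 0 := rfl
@[simp] lemma inv_σ (g : GenPerm m n) : (g⁻¹).σ = g.σ⁻¹ := rfl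
@[simp] lemma inv_c (g : GenPerm m n) (j : Fin n) : (g⁻¹).c j = - g.c (g.σ⁻¹ j) := rfl

instance : Group (GenPerm m n) where
  mul_assoc a b c := by
    ext j
    · simp [mul_assoc]
    · simp [add_assoc]
  one_mul a := by
    ext j
    · simp
    · simp
  mul_one a := by
    ext j
    · simp
    · simp
  inv_mul_cancel a := by
    ext j
    · simp
    · simp

/-- The generator `s i`: `s 0` multiplies the first letter's phase by `ω`;
for `1 ≤ i < n`, `s i` swaps positions `i` and `i+1` (1-indexed), i.e. `i-1` and `i`
(0-indexed). -/
def s (i : ℕ) : GenPerm m n :=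
  if h : i < n then
    if h0 : i = 0 then ⟨1, fun j => if j = ⟨0, by omega⟩ then 1 else 0⟩
    else ⟨Equiv.swap ⟨i - 1, by omega⟩ ⟨i, h⟩, 0⟩
  else 1

/-- `t i = s i * s (i-1) * ⋯ * s 1 * s 0`. -/
def t (i : ℕ) : GenPerm m n := ((List.range (i + 1)).map (fun j => (s (i - j) : GenPerm m n))).prod

/-- `rep k = t (n-1) ^ k (n-1) * ⋯ * t 0 ^ k 0`. -/
def rep (k : Fin n → ℕ) : GenPerm m n :=
  (List.ofFn (fun i : Fin n => (t (i : ℕ) : GenPerm m n) ^ k i)).reverse.prod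

open scoped Classical in
/-- The flag major index: the sum of the exponents in the canonical representation
`π = t (n-1) ^ k (n-1) * ⋯ * t 0 ^ k 0` with `0 ≤ k i < m * (i+1)`. -/
noncomputable def flagMajor (π : GenPerm m n) : ℕ :=
  if h : ∃ k : Fin n → ℕ, (∀ i : Fin n, k i < m * ((i : ℕ) + 1)) ∧ π = rep k
  then ∑ i, h.choose i else 0

/-- The major index of a generalized permutation with respect to the linear order
`1·ω^{m-1} < ⋯ < n·ω^{m-1} < ⋯ < 1·ω < ⋯ < n·ω < 1 < ⋯ < n`
(a 1-indexed descent at position `i` contributes `i`). -/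
def majG (π : GenPerm m n) : ℕ :=
  ∑ i ∈ Finset.range n, if h : i + 1 < n then
    (if (π.c ⟨i, by omega⟩).val < (π.c ⟨i + 1, h⟩).val ∨
        (π.c ⟨i, by omega⟩ = π.c ⟨i + 1, h⟩ ∧ π.σ ⟨i + 1, h⟩ < π.σ ⟨i, by omega⟩)
     then i + 1 else 0) else 0

/-- Coxeter length with respect to the generators `s 0, s 1, …, s (n-1)`. -/
noncomputable def len (π : GenPerm m n) : ℕ :=
  sInf {l | ∃ w : List (Fin n), w.length = l ∧ (w.map (fun i => (s (i : ℕ) : GenPerm m n))).prod = π}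

/-- The element `t_{n-1}`: as a generalized permutation, `t_{n-1}(i) = i - 1` for
`i ≠ 1` and `t_{n-1}(1) = ω · n`. -/
def tTop {m n : ℕ} : GenPerm m n :=
  ⟨(finRotate n)⁻¹, fun j => if (j : ℕ) = 0 then 1 else 0⟩

/-- `maj_{m,n}(π) = m · maj(π) + Σ_i Log_ω π(i)`. -/
def majmn {m n : ℕ} (π : GenPerm m n) : ℕ :=
  m * majG π + ∑ i : Fin n, (π.c i).val

/-! Left multiplication by `t_{n-1}` acts on the `mn` colored letters as the cyclic shift down by
one step of the order `1·ω^{m-1} < ⋯ < n·ω^{m-1} < ⋯ < 1 < ⋯ < n`: each letter goes to its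
predecessor, and the minimum `1·ω^{m-1}` goes to the maximum `n`. If the minimum does not occur,
the relative order of the letters of `π` is unchanged, so `maj` is unchanged while one phase
exponent grows by one. If it occurs at position `j < n`, it becomes the maximum: a descent at `j`
is created and the one at `j - 1` disappears, so `maj` grows by one, while that phase exponent
drops from `m - 1` to `0`; in total `m - (m - 1) = 1`. -/

lemma val_finRotate_inv (x : Fin n) :
    ((finRotate n)⁻¹ x : ℕ) = if (x : ℕ) = 0 then n - 1 else x - 1 := by
  obtain ⟨k, rfl⟩ : ∃ k, n = k + 1 := ⟨n - 1, by have := x.pos; omega⟩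
  rw [Equiv.Perm.inv_def, finRotate_symm_apply, Fin.coe_sub_one, Nat.add_sub_cancel]
  exact if_congr Fin.ext_iff rfl rfl

section descentMajor

variable {α β : Type*} [LinearOrder α] [LinearOrder β]

def descentWeight (f : Fin n → α) (i : ℕ) : ℕ :=
  if h : i + 1 < n then (if f ⟨i + 1, h⟩ < f ⟨i, by omega⟩ then i + 1 else 0) else 0

def descentMajor (f : Fin n → α) : ℕ :=
  ∑ i ∈ range n, descentWeight f i

lemma descentMajor_congr {f : Fin n → α} {g : Fin n → β}
    (hfg : ∀ k l, g k < g l ↔ f k < f l) : descentMajor g = descentMajor f := by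
  simp only [descentMajor, descentWeight, hfg]

lemma descentWeight_min_to_max {f : Fin n → α} {g : Fin n → β} {j : Fin n}
    (hj : (j : ℕ) + 1 < n) (hf : ∀ k ≠ j, f j < f k) (hg : ∀ k ≠ j, g k < g j)
    (hfg : ∀ k l, k ≠ j → l ≠ j → (g k < g l ↔ f k < f l)) (i : ℕ) :
    descentWeight g i + (if i + 1 = j then (j : ℕ) else 0) =
      descentWeight f i + (if i = j then (j : ℕ) + 1 else 0) := by
  unfold descentWeight
  by_cases hi : i + 1 < n
  · simp only [dif_pos hi]
    have hsucc : (⟨i + 1, hi⟩ : Fin n) ≠ ⟨i, by omega⟩ := by simp [Fin.ext_iff]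
    by_cases hij : i = j
    · have hij_fin : (⟨i, by omega⟩ : Fin n) = j := Fin.ext hij
      rw [hij_fin] at hsucc ⊢
      rw [if_pos (hg _ hsucc), if_neg (hf _ hsucc).not_gt, if_neg (by omega), if_pos hij]
      omega
    by_cases hij' : i + 1 = j
    · have hij_fin : (⟨i + 1, hi⟩ : Fin n) = j := Fin.ext hij'
      rw [hij_fin] at hsucc ⊢
      rw [if_neg (hg _ hsucc.symm).not_gt, if_pos (hf _ hsucc.symm), if_pos hij', if_neg hij]
      omega
    · simp only [hfg ⟨i + 1, hi⟩ ⟨i, by omega⟩ (Fin.ne_of_val_ne hij') (Fin.ne_of_val_ne hij)]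
      split_ifs <;> omega
  · simp only [dif_neg hi]
    split_ifs <;> omega

lemma sum_range_ite_add_one_eq (j : ℕ) (hj : j < n) :
    ∑ i ∈ range n, (if i + 1 = j then j else 0) = j := by
  cases j with
  | zero => simp
  | succ k => simp [Finset.sum_ite_eq', show k < n by omega]

lemma descentMajor_min_to_max {f : Fin n → α} {g : Fin n → β} (j : Fin n)
    (hj : (j : ℕ) + 1 < n) (hf : ∀ k ≠ j, f j < f k) (hg : ∀ k ≠ j, g k < g j)
    (hfg : ∀ k l, k ≠ j → l ≠ j → (g k < g l ↔ f k < f l)) :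
    descentMajor g = descentMajor f + 1 := by
  have h := Finset.sum_congr rfl fun i (_ : i ∈ range n) => descentWeight_min_to_max hj hf hg hfg i
  rw [sum_add_distrib, sum_add_distrib, sum_range_ite_add_one_eq _ j.isLt, sum_ite_eq',
    if_pos (mem_range.mpr j.isLt)] at h
  unfold descentMajor
  omega

end descentMajor

lemma mul_add_lt_mul_add_iff {a b x y d : ℕ} (hx : x < d) (hy : y < d) :
    a * d + x < b * d + y ↔ a < b ∨ a = b ∧ x < y := by
  rcases lt_trichotomy a b with hab | rfl | hab
  · have := Nat.mul_le_mul_right d hab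
    simp only [hab, true_or, iff_true]
    nlinarith
  · simp
  · have := Nat.mul_le_mul_right d hab
    simp only [hab.not_gt, hab.ne', false_and, or_self, iff_false, not_lt]
    nlinarith

lemma val_tTop_mul_σ (π : GenPerm m n) (j : Fin n) :
    ((tTop * π).σ j : ℕ) = if (π.σ j : ℕ) = 0 then n - 1 else π.σ j - 1 :=
  val_finRotate_inv (π.σ j)

section colorRank

variable [NeZero m]

/-- The 0-based position of the colored letter `π(j)` in the order
`1·ω^{m-1} < ⋯ < n·ω^{m-1} < ⋯ < 1 < ⋯ < n`. -/
def colorRank (π : GenPerm m n) (j : Fin n) : ℕ :=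
  (m - 1 - (π.c j).val) * n + π.σ j

lemma colorRank_lt_colorRank_iff (π : GenPerm m n) (j k : Fin n) :
    colorRank π j < colorRank π k ↔
      (π.c k).val < (π.c j).val ∨ (π.c k = π.c j ∧ π.σ j < π.σ k) := by
  have hj := ZMod.val_lt (π.c j)
  have hk := ZMod.val_lt (π.c k)
  rw [colorRank, colorRank, mul_add_lt_mul_add_iff (π.σ j).isLt (π.σ k).isLt,
    ← (ZMod.val_injective m).eq_iff, Fin.lt_def]
  omega

lemma majG_eq_descentMajor_colorRank (π : GenPerm m n) :
    majG π = descentMajor (colorRank π) := by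
  simp only [majG, descentMajor, descentWeight, colorRank_lt_colorRank_iff]

lemma colorRank_lt (π : GenPerm m n) (j : Fin n) : colorRank π j < m * n := by
  have hσ := (π.σ j).isLt
  have hc := Nat.mul_le_mul_right n (Nat.sub_le (m - 1) (π.c j).val)
  have hn := Nat.le_mul_of_pos_left n (NeZero.pos m)
  rw [Nat.sub_one_mul] at hc
  rw [colorRank]
  omega

lemma colorRank_eq_zero_iff (π : GenPerm m n) (j : Fin n) :
    colorRank π j = 0 ↔ (π.σ j : ℕ) = 0 ∧ (π.c j).val = m - 1 := by
  have := ZMod.val_lt (π.c j)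
  have := j.pos
  simp only [colorRank, Nat.add_eq_zero_iff, mul_eq_zero]
  omega

lemma val_tTop_mul_c (π : GenPerm m n) (j : Fin n) :
    ((tTop * π).c j).val = if (π.σ j : ℕ) = 0 then ((π.c j).val + 1) % m else (π.c j).val := by
  change ((if (π.σ j : ℕ) = 0 then 1 else 0) + π.c j).val = _
  split_ifs
  · rw [ZMod.val_add, ZMod.val_one_eq_one_mod, Nat.mod_add_mod, add_comm]
  · rw [zero_add]

lemma colorRank_tTop_mul (π : GenPerm m n) (j : Fin n) :
    colorRank (tTop * π) j = if colorRank π j = 0 then m * n - 1 else colorRank π j - 1 := by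
  have hc := ZMod.val_lt (π.c j)
  have hσ := (π.σ j).isLt
  have hrank := colorRank_eq_zero_iff π j
  unfold colorRank at hrank ⊢
  rw [val_tTop_mul_σ, val_tTop_mul_c]
  by_cases hσ0 : (π.σ j : ℕ) = 0
  · simp only [hσ0, if_true, true_and] at hrank ⊢
    by_cases hcm : (π.c j).val = m - 1
    · have := Nat.le_mul_of_pos_left n (NeZero.pos m)
      simp only [hcm, Nat.sub_add_cancel NeZero.one_le, Nat.mod_self, Nat.sub_self, zero_mul,
        add_zero, if_true, Nat.sub_zero, Nat.sub_one_mul]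
      omega
    · rw [Nat.mod_eq_of_lt (by omega), if_neg (mt hrank.mp hcm)]
      obtain ⟨e, he⟩ : ∃ e, m - 1 - (π.c j).val = e + 1 := ⟨m - 1 - (π.c j).val - 1, by omega⟩
      rw [he, show m - 1 - ((π.c j).val + 1) = e by omega, add_one_mul]
      omega
  · simp only [hσ0, if_false]
    split_ifs <;> omega

lemma sum_val_c_tTop_mul (π : GenPerm m n) (j : Fin n) (hj : (π.σ j : ℕ) = 0) :
    ∑ i, ((tTop * π).c i).val + (π.c j).val = ∑ i, (π.c i).val + ((π.c j).val + 1) % m := by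
  have hrest : ∀ i ∈ univ.erase j, ((tTop * π).c i).val = (π.c i).val := fun i hi => by
    have hσi : (π.σ i : ℕ) ≠ 0 := fun h =>
      (mem_erase.mp hi).1 (π.σ.injective (Fin.ext (h.trans hj.symm)))
    rw [val_tTop_mul_c, if_neg hσi]
  rw [← add_sum_erase _ _ (mem_univ j), ← add_sum_erase _ _ (mem_univ j), sum_congr rfl hrest,
    val_tTop_mul_c, if_pos hj]
  omega

lemma colorRank_ne_zero_of_ne (π : GenPerm m n) {j k : Fin n} (hj : (π.σ j : ℕ) = 0)
    (hk : k ≠ j) : colorRank π k ≠ 0 := fun h =>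
  hk (π.σ.injective (Fin.ext (((colorRank_eq_zero_iff π k).mp h).1.trans hj.symm)))

lemma majG_tTop_mul_of_colorRank_ne_zero (π : GenPerm m n) (h : ∀ k, colorRank π k ≠ 0) :
    majG (tTop * π) = majG π := by
  rw [majG_eq_descentMajor_colorRank, majG_eq_descentMajor_colorRank]
  refine descentMajor_congr fun k l => ?_
  rw [colorRank_tTop_mul, colorRank_tTop_mul, if_neg (h k), if_neg (h l)]
  have := Nat.pos_of_ne_zero (h k)
  have := Nat.pos_of_ne_zero (h l)
  omega

lemma majG_tTop_mul_of_colorRank_eq_zero (π : GenPerm m n) (j : Fin n) (hj : colorRank π j = 0)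
    (hlast : (j : ℕ) + 1 < n) : majG (tTop * π) = majG π + 1 := by
  have hpos : ∀ k ≠ j, colorRank π k ≠ 0 :=
    fun k => colorRank_ne_zero_of_ne π ((colorRank_eq_zero_iff π j).mp hj).1
  rw [majG_eq_descentMajor_colorRank, majG_eq_descentMajor_colorRank]
  refine descentMajor_min_to_max j hlast (fun k hk => ?_) (fun k hk => ?_) (fun k l hk hl => ?_)
  · exact hj ▸ Nat.pos_of_ne_zero (hpos k hk)
  · rw [colorRank_tTop_mul, colorRank_tTop_mul, if_pos hj, if_neg (hpos k hk)]
    have := colorRank_lt π k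
    have := Nat.pos_of_ne_zero (hpos k hk)
    omega
  · rw [colorRank_tTop_mul, colorRank_tTop_mul, if_neg (hpos k hk), if_neg (hpos l hl)]
    have := Nat.pos_of_ne_zero (hpos k hk)
    have := Nat.pos_of_ne_zero (hpos l hl)
    omega

end colorRank

/-- Lemma 3.2: if `π(n) ≠ ω^{m-1}` then
`maj_{m,n}(t_{n-1} π) = maj_{m,n}(π) + 1`. -/
theorem majmn_tTop_mul (m n : ℕ) (hm : 0 < m) (hn : 0 < n) (π : GenPerm m n)
    (hπ : ¬(π.σ ⟨n - 1, by omega⟩ = ⟨0, hn⟩ ∧ (π.c ⟨n - 1, by omega⟩).val = m - 1)) :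
    majmn (tTop * π) = majmn π + 1 := by
  have : NeZero m := ⟨hm.ne'⟩
  obtain ⟨j, hσj⟩ := π.σ.surjective ⟨0, hn⟩
  have hsum := sum_val_c_tTop_mul π j (congrArg Fin.val hσj)
  have hc := ZMod.val_lt (π.c j)
  by_cases hmin : (π.c j).val = m - 1
  · have hlast : (j : ℕ) + 1 < n := by
      by_contra hj
      have hj_eq : j = ⟨n - 1, Nat.sub_one_lt_of_lt hn⟩ :=
        Fin.ext (show (j : ℕ) = n - 1 by have := j.isLt; omega)
      exact hπ ⟨hj_eq ▸ hσj, hj_eq ▸ hmin⟩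
    have hG := majG_tTop_mul_of_colorRank_eq_zero π j
      ((colorRank_eq_zero_iff π j).mpr ⟨congrArg Fin.val hσj, hmin⟩) hlast
    rw [hmin, Nat.sub_add_cancel hm, Nat.mod_self] at hsum
    simp only [majmn, hG, mul_add]
    omega
  · have hG := majG_tTop_mul_of_colorRank_ne_zero π fun k => by
      by_cases hk : k = j
      · rw [hk, Ne, colorRank_eq_zero_iff]
        exact fun h => hmin h.2
      · exact colorRank_ne_zero_of_ne π (congrArg Fin.val hσj) hk
    rw [Nat.mod_eq_of_lt (by omega)] at hsum
    simp only [majmn, hG]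
    omega

end GenPerm
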